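/- Let (S_1,…,S_d) be a Cuntz family on H with a unit vector Ω cyclic for the *-algebra generated by S_1,…,S_d, and let N be the von Neumann algebra generated by S_1,…,S_d. Suppose the vector state ψ(X) = ⟨Ω, X Ω⟩ on N is Λ-invariant, where Λ(X) = Σ_{k=1}^d S_k X S_k*. Let P be the support projection of ψ in N, i.e. the smallest orthogonal projection in N with P Ω = Ω. Then: (i) Λ(P) ≥ P; (ii) P S_k* P = S_k* P for all k; (iii) with v_k = P S_k P regarded as operators on K = PH, Σ_{k=1}^d v_k v_k* equals the identity of K; and (iv) the increasing sequence of projections Λ^n(P) converges strongly to the identity of H. -/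
import Mathlib


open ContinuousLinearMap Filter
open RCLike
open scoped ComplexInnerProductSpace ComplexOrder

noncomputable section

/-- The operator `S_I = S_{i₁} ⋯ S_{i_m}` associated to a finite multi-index
(the empty multi-index gives the identity). -/
def cword {d : ℕ} {H : Type*} [NormedAddCommGroup H] [InnerProductSpace ℂ H]
    (S : Fin d → H →L[ℂ] H) (I : List (Fin d)) : H →L[ℂ] H :=
  (I.map S).prod

/-- A Cuntz family: `Sᵢ* Sⱼ = δᵢⱼ 1` and `∑ₖ Sₖ Sₖ* = 1`. -/
def IsCuntzFamily {d : ℕ} {H : Type*} [NormedAddCommGroup H] [InnerProductSpace ℂ H]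
    [CompleteSpace H] (S : Fin d → H →L[ℂ] H) : Prop :=
  (∀ i j : Fin d, adjoint (S i) ∘L S j = if i = j then 1 else 0) ∧
    ∑ k : Fin d, S k ∘L adjoint (S k) = 1

/-- The canonical endomorphism `Λ(X) = ∑ₖ Sₖ X Sₖ*`. -/
def cLam {d : ℕ} {H : Type*} [NormedAddCommGroup H] [InnerProductSpace ℂ H] [CompleteSpace H]
    (S : Fin d → H →L[ℂ] H) (X : H →L[ℂ] H) : H →L[ℂ] H :=
  ∑ k : Fin d, S k ∘L X ∘L adjoint (S k)

section Helpers

variable {H : Type*} [NormedAddCommGroup H] [InnerProductSpace ℂ H] [CompleteSpace H]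

lemma proj_inner_key {Q : H →L[ℂ] H} (hsa : IsSelfAdjoint Q) (hid : IsIdempotentElem Q)
    (a b : H) : ⟪Q a, Q b⟫ = ⟪a, Q b⟫ := by
  have h := ContinuousLinearMap.adjoint_inner_left Q (Q b) a
  rw [hsa.adjoint_eq] at h
  rw [h, ← ContinuousLinearMap.mul_apply, hid.eq]

lemma proj_norm_apply_le {Q : H →L[ℂ] H} (hsa : IsSelfAdjoint Q) (hid : IsIdempotentElem Q)
    (x : H) : ‖Q x‖ ≤ ‖x‖ := by
  have h2 : (‖Q x‖ : ℝ) ^ 2 = re ⟪x, Q x⟫ := by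
    rw [← proj_inner_key hsa hid, inner_self_eq_norm_sq]
  have h3 : re ⟪x, Q x⟫ ≤ ‖x‖ * ‖Q x‖ :=
    le_trans (RCLike.re_le_norm _) (norm_inner_le_norm _ _)
  rcases eq_or_lt_of_le (norm_nonneg (Q x)) with h | h
  · rw [← h]; exact norm_nonneg x
  · nlinarith

lemma proj_fix_of_inner_one {Q : H →L[ℂ] H} (hsa : IsSelfAdjoint Q) (hid : IsIdempotentElem Q)
    {Ω : H} (hΩ : ‖Ω‖ = 1) (h : ⟪Ω, Q Ω⟫ = 1) : Q Ω = Ω := by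
  have h2 : ⟪Q Ω, Ω⟫ = 1 := by
    rw [← inner_conj_symm, h, map_one]
  have h3 : ⟪Q Ω - Ω, Q Ω - Ω⟫ = 0 := by
    rw [inner_sub_sub_self, proj_inner_key hsa hid, h, h2, inner_self_eq_norm_sq_to_K, hΩ]
    norm_num
  rw [inner_self_eq_zero, sub_eq_zero] at h3
  exact h3

lemma proj_comp_of_le {P Q : H →L[ℂ] H} (hQsa : IsSelfAdjoint Q) (hQid : IsIdempotentElem Q)
    (hPid : IsIdempotentElem P) (hle : (Q - P).IsPositive) : Q ∘L P = P := by
  ext x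
  simp only [ContinuousLinearMap.comp_apply]
  set v := P x with hv
  have hPv : P v = v := by rw [hv, ← ContinuousLinearMap.mul_apply, hPid.eq]
  have hpos := hle.2 v
  rw [reApplyInnerSelf_apply] at hpos
  simp only [ContinuousLinearMap.sub_apply, inner_sub_left, map_sub, hPv] at hpos
  have h3 : ‖Q v - v‖ ^ 2 ≤ 0 := by
    rw [← inner_self_eq_norm_sq (𝕜 := ℂ), inner_sub_sub_self, proj_inner_key hQsa hQid]
    simp only [map_add, map_sub]
    rw [inner_re_symm v (Q v)]
    rw [inner_self_eq_norm_sq, ← inner_self_eq_norm_sq (𝕜 := ℂ) v] at *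
    linarith
  have h4 : Q v - v = 0 := by
    have h5 : ‖Q v - v‖ ^ 2 = 0 := le_antisymm h3 (sq_nonneg _)
    have := pow_eq_zero_iff (n := 2) (by norm_num) |>.mp h5
    exact norm_eq_zero.mp this
  rw [sub_eq_zero] at h4
  exact h4

variable {d : ℕ} (S : Fin d → H →L[ℂ] H)

lemma cLam_eq_sum_mul (X : H →L[ℂ] H) :
    cLam S X = ∑ k : Fin d, S k * (X * adjoint (S k)) := rfl

variable {S} (hS : IsCuntzFamily S)
include hS

lemma hCuntz : ∀ i j, adjoint (S i) * S j = if i = j then 1 else 0 := hS.1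

lemma cLam_mul_S (X : H →L[ℂ] H) (i : Fin d) : cLam S X * S i = S i * X := by
  rw [cLam_eq_sum_mul, Finset.sum_mul]
  have : ∀ k : Fin d, S k * (X * adjoint (S k)) * S i
      = if i = k then S k * X else 0 := by
    intro k
    rw [mul_assoc, mul_assoc, hCuntz hS k i]
    by_cases h : k = i
    · simp [h]
    · rw [if_neg h, if_neg (fun hh : i = k => h hh.symm), mul_zero, mul_zero]
  simp_rw [this]
  simp

lemma adjS_mul_cLam (X : H →L[ℂ] H) (i : Fin d) :
    adjoint (S i) * cLam S X = X * adjoint (S i) := by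
  rw [cLam_eq_sum_mul, Finset.mul_sum]
  have : ∀ k : Fin d, adjoint (S i) * (S k * (X * adjoint (S k)))
      = if i = k then X * adjoint (S k) else 0 := by
    intro k
    rw [← mul_assoc, hCuntz hS i k]
    by_cases h : i = k <;> simp [h]
  simp_rw [this]
  simp

lemma cLam_mul (X Y : H →L[ℂ] H) : cLam S X * cLam S Y = cLam S (X * Y) := by
  conv_lhs => rw [cLam_eq_sum_mul S Y, Finset.mul_sum]
  rw [cLam_eq_sum_mul]
  refine Finset.sum_congr rfl fun k _ => ?_
  calc cLam S X * (S k * (Y * adjoint (S k)))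
      = (cLam S X * S k) * (Y * adjoint (S k)) := by rw [mul_assoc]
    _ = (S k * X) * (Y * adjoint (S k)) := by rw [cLam_mul_S hS X k]
    _ = S k * (X * Y * adjoint (S k)) := by
        rw [mul_assoc (S k), mul_assoc X, ← mul_assoc X Y]

omit hS in
lemma cLam_adjoint (X : H →L[ℂ] H) : adjoint (cLam S X) = cLam S (adjoint X) := by
  rw [cLam_eq_sum_mul, cLam_eq_sum_mul, ← ContinuousLinearMap.star_eq_adjoint, star_sum]
  refine Finset.sum_congr rfl fun k _ => ?_
  simp only [star_mul, ContinuousLinearMap.star_eq_adjoint, adjoint_adjoint, mul_assoc]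

omit hS in
lemma cLam_sub (X Y : H →L[ℂ] H) : cLam S (X - Y) = cLam S X - cLam S Y := by
  rw [cLam_eq_sum_mul, cLam_eq_sum_mul, cLam_eq_sum_mul, ← Finset.sum_sub_distrib]
  refine Finset.sum_congr rfl fun k _ => ?_
  rw [sub_mul, mul_sub]

omit hS in
lemma cLam_pos {X : H →L[ℂ] H} (hX : X.IsPositive) : (cLam S X).IsPositive := by
  rw [cLam]
  refine Finset.sum_induction _ _ (fun a b ha hb => ha.add hb) isPositive_zero
    fun k _ => hX.conj_adjoint (S k)

omit hS in
lemma cLam_sa {X : H →L[ℂ] H} (hX : IsSelfAdjoint X) : IsSelfAdjoint (cLam S X) := by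
  rw [isSelfAdjoint_iff', cLam_adjoint, hX.adjoint_eq]

lemma cLam_idem {X : H →L[ℂ] H} (hX : IsIdempotentElem X) : IsIdempotentElem (cLam S X) := by
  unfold IsIdempotentElem
  rw [cLam_mul hS, hX.eq]

omit hS [CompleteSpace H] in
lemma cword_cons (i : Fin d) (I : List (Fin d)) :
    cword S (i :: I) = S i * cword S I := by
  simp [cword]

lemma iter_cLam_mul_cword (X : H →L[ℂ] H) (I : List (Fin d)) (n : ℕ) :
    (cLam S)^[I.length + n] X * cword S I = cword S I * (cLam S)^[n] X := by
  induction I with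
  | nil => simp [cword]
  | cons i I ih =>
    have hlen : (i :: I).length + n = (I.length + n) + 1 := by
      simp [List.length_cons]; ring
    rw [hlen, Function.iterate_succ_apply', cword_cons, ← mul_assoc,
      cLam_mul_S hS, mul_assoc, ih]
    exact (mul_assoc _ _ _).symm

end Helpers

set_option maxHeartbeats 1000000 in
/-- Let `S` be a Cuntz family on `H` with cyclic unit vector `Ω` whose
vector state `ψ` on the generated von Neumann algebra `N = {Sₖ, Sₖ*}''` is `Λ`-invariant,
and let `P` be the support projection of `ψ` in `N` (the smallest projection of `N` fixing
`Ω`). Then `P` is subharmonic (`Λ(P) ≥ P`), `P Sₖ* P = Sₖ* P`, the compressions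
`vₖ = P Sₖ P` satisfy `∑ₖ vₖ vₖ* = P` (the identity of `K = PH`), and `Λⁿ(P) ↑ 1`
strongly. -/
theorem support_projection_subharmonic {d : ℕ} (hd : 2 ≤ d)
    {H : Type*} [NormedAddCommGroup H] [InnerProductSpace ℂ H] [CompleteSpace H]
    (S : Fin d → H →L[ℂ] H) (hS : IsCuntzFamily S)
    (Ω : H) (hΩ : ‖Ω‖ = 1)
    (hcyc : Dense ((Submodule.span ℂ
        {x : H | ∃ I J : List (Fin d), x = cword S I (adjoint (cword S J) Ω)} :
        Submodule ℂ H) : Set H))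
    (N : Set (H →L[ℂ] H))
    (hN : N = Set.centralizer (Set.centralizer
        (Set.range S ∪ Set.range (fun k => adjoint (S k)))))
    (hinv : ∀ X ∈ N, ⟪Ω, cLam S X Ω⟫ = ⟪Ω, X Ω⟫)
    -- `P` is the support projection of `ψ` in `N`
    (P : H →L[ℂ] H) (hPmem : P ∈ N) (hPsa : IsSelfAdjoint P) (hPidem : IsIdempotentElem P)
    (hPΩ : P Ω = Ω)
    (hPmin : ∀ Q ∈ N, IsSelfAdjoint Q → IsIdempotentElem Q → Q Ω = Ω → (Q - P).IsPositive) :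
    -- (i)
    (cLam S P - P).IsPositive ∧
    -- (ii)
    (∀ k, P ∘L adjoint (S k) ∘L P = adjoint (S k) ∘L P) ∧
    -- (iii) with `vₖ = P Sₖ P`, `∑ₖ vₖ vₖ*` is the identity of `K = PH`, namely `P`
    (∑ k : Fin d, (P ∘L S k ∘L P) ∘L adjoint (P ∘L S k ∘L P)) = P ∧
    -- (iv)
    (∀ x : H, Filter.Tendsto (fun n : ℕ => ((cLam S)^[n] P) x) Filter.atTop (nhds x)) := by

  obtain ⟨hC, hsum⟩ := hS
  have hsum' : ∑ k : Fin d, S k * adjoint (S k) = 1 := hsum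
  -- membership facts
  have hNsub : N = ↑(Subring.centralizer (Set.centralizer
      (Set.range S ∪ Set.range (fun k => adjoint (S k))))) := by
    rw [hN, Subring.coe_centralizer]
  have hSmem : ∀ k, S k ∈ N := by
    intro k
    rw [hN]
    exact Set.subset_centralizer_centralizer (Set.mem_union_left _ ⟨k, rfl⟩)
  have hSadjmem : ∀ k, adjoint (S k) ∈ N := by
    intro k
    rw [hN]
    exact Set.subset_centralizer_centralizer (Set.mem_union_right _ ⟨k, rfl⟩)
  have hLamP_mem : cLam S P ∈ N := by
    rw [hNsub]
    rw [hNsub] at hSmem hSadjmem hPmem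
    exact Subring.sum_mem _ fun k _ =>
      Subring.mul_mem _ (hSmem k) (Subring.mul_mem _ hPmem (hSadjmem k))
  -- (i)
  have hQ1sa : IsSelfAdjoint (cLam S P) := cLam_sa hPsa
  have hQ1idem : IsIdempotentElem (cLam S P) := cLam_idem ⟨hC, hsum⟩ hPidem
  have hinnerΩ : ⟪Ω, (cLam S P) Ω⟫ = 1 := by
    rw [hinv P hPmem, hPΩ, inner_self_eq_norm_sq_to_K, hΩ]
    norm_num
  have hQ1Ω : (cLam S P) Ω = Ω := proj_fix_of_inner_one hQ1sa hQ1idem hΩ hinnerΩ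
  have hi : (cLam S P - P).IsPositive := hPmin _ hLamP_mem hQ1sa hQ1idem hQ1Ω
  -- (ii)
  have hQ1P : cLam S P * P = P := proj_comp_of_le hQ1sa hQ1idem hPidem hi
  have hii : ∀ k, P ∘L adjoint (S k) ∘L P = adjoint (S k) ∘L P := by
    intro k
    have h1 : adjoint (S k) * (cLam S P * P) = adjoint (S k) * P := by rw [hQ1P]
    rw [← mul_assoc, adjS_mul_cLam ⟨hC, hsum⟩, mul_assoc] at h1
    exact h1
  have hii' : ∀ k, P * (adjoint (S k) * P) = adjoint (S k) * P := by
    intro k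
    simp only [ContinuousLinearMap.mul_def]
    exact hii k
  have hii2 : ∀ k, P * S k * P = P * S k := by
    intro k
    have h := congrArg star (hii' k)
    simp only [star_mul, ContinuousLinearMap.star_eq_adjoint, adjoint_adjoint,
      hPsa.adjoint_eq] at h
    simpa only [mul_assoc] using h
  -- (iii)
  have hterm : ∀ k, (P ∘L S k ∘L P) ∘L adjoint (P ∘L S k ∘L P)
      = P * ((S k * adjoint (S k)) * P) := by
    intro k
    have hadjk : adjoint (P ∘L S k ∘L P) = adjoint (S k) ∘L P := by
      rw [adjoint_comp, adjoint_comp, hPsa.adjoint_eq]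
      have : (P ∘L adjoint (S k)) ∘L P = P ∘L adjoint (S k) ∘L P := by
        exact mul_assoc _ _ _
      rw [this, hii k]
    rw [hadjk]
    show (P * (S k * P)) * (adjoint (S k) * P) = P * ((S k * adjoint (S k)) * P)
    calc (P * (S k * P)) * (adjoint (S k) * P)
        = (P * S k * P) * (adjoint (S k) * P) := by simp only [mul_assoc]
      _ = (P * S k) * (adjoint (S k) * P) := by rw [hii2 k]
      _ = P * ((S k * adjoint (S k)) * P) := by simp only [mul_assoc]
  have hiii : (∑ k : Fin d, (P ∘L S k ∘L P) ∘L adjoint (P ∘L S k ∘L P)) = P := by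
    calc (∑ k : Fin d, (P ∘L S k ∘L P) ∘L adjoint (P ∘L S k ∘L P))
        = ∑ k : Fin d, P * ((S k * adjoint (S k)) * P) :=
          Finset.sum_congr rfl fun k _ => hterm k
      _ = P * ((∑ k : Fin d, S k * adjoint (S k)) * P) := by
          rw [Finset.sum_mul, Finset.mul_sum]
      _ = P := by rw [hsum', one_mul, hPidem.eq]
  -- (iv)
  set Q : ℕ → (H →L[ℂ] H) := fun n => (cLam S)^[n] P with hQdef
  have hQ0 : Q 0 = P := rfl
  have hQsucc : ∀ n, Q (n + 1) = cLam S (Q n) := fun n =>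
    Function.iterate_succ_apply' (cLam S) n P
  have hQsa : ∀ n, IsSelfAdjoint (Q n) := by
    intro n
    induction n with
    | zero => exact hPsa
    | succ n ih => rw [hQsucc]; exact cLam_sa ih
  have hQidem : ∀ n, IsIdempotentElem (Q n) := by
    intro n
    induction n with
    | zero => exact hPidem
    | succ n ih => rw [hQsucc]; exact cLam_idem ⟨hC, hsum⟩ ih
  have hQpos : ∀ n, (Q n - P).IsPositive := by
    intro n
    induction n with
    | zero => rw [hQ0, sub_self]; exact isPositive_zero
    | succ n ih =>
      have heq : Q (n + 1) - P = cLam S (Q n - P) + (cLam S P - P) := by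
        rw [hQsucc, cLam_sub]; abel
      rw [heq]
      exact (cLam_pos ih).add hi
  have hQP : ∀ n, Q n * P = P := fun n =>
    proj_comp_of_le (hQsa n) (hQidem n) hPidem (hQpos n)
  have hQfix : ∀ n (x : H), P x = x → Q n x = x := by
    intro n x hx
    calc Q n x = Q n (P x) := by rw [hx]
      _ = (Q n * P) x := rfl
      _ = P x := by rw [hQP n]
      _ = x := hx
  have hPfixw : ∀ J : List (Fin d),
      P * (adjoint (cword S J) * P) = adjoint (cword S J) * P := by
    intro J
    induction J with
    | nil =>
      have h1 : cword S ([] : List (Fin d)) = 1 := rfl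
      rw [h1, ← ContinuousLinearMap.star_eq_adjoint, star_one, one_mul, hPidem.eq]
    | cons j J ih =>
      have hw : adjoint (cword S (j :: J)) = adjoint (cword S J) * adjoint (S j) := by
        rw [cword_cons, ← ContinuousLinearMap.star_eq_adjoint, star_mul]
        rfl
      rw [hw]
      have h1 := hii' j
      calc P * ((adjoint (cword S J) * adjoint (S j)) * P)
          = P * (adjoint (cword S J) * (adjoint (S j) * P)) := by simp only [mul_assoc]
        _ = P * (adjoint (cword S J) * (P * (adjoint (S j) * P))) := by rw [h1]
        _ = (P * (adjoint (cword S J) * P)) * (adjoint (S j) * P) := by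
            simp only [mul_assoc]
        _ = (adjoint (cword S J) * P) * (adjoint (S j) * P) := by rw [ih]
        _ = adjoint (cword S J) * (P * (adjoint (S j) * P)) := by rw [mul_assoc]
        _ = adjoint (cword S J) * (adjoint (S j) * P) := by rw [h1]
        _ = (adjoint (cword S J) * adjoint (S j)) * P := by rw [mul_assoc]
  have hPwordΩ : ∀ J : List (Fin d),
      P (adjoint (cword S J) Ω) = adjoint (cword S J) Ω := by
    intro J
    have h := congrArg (fun T : H →L[ℂ] H => T Ω) (hPfixw J)
    simp only [ContinuousLinearMap.mul_apply, hPΩ] at h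
    exact h
  have hgen : ∀ (I J : List (Fin d)) (n : ℕ), I.length ≤ n →
      Q n (cword S I (adjoint (cword S J) Ω)) = cword S I (adjoint (cword S J) Ω) := by
    intro I J n hn
    obtain ⟨m, rfl⟩ := Nat.exists_eq_add_of_le hn
    have h1 := iter_cLam_mul_cword ⟨hC, hsum⟩ P I m
    have h2 := congrArg (fun T : H →L[ℂ] H => T (adjoint (cword S J) Ω)) h1
    simp only [ContinuousLinearMap.mul_apply] at h2
    rw [hQfix m _ (hPwordΩ J)] at h2
    exact h2
  have hspan : ∀ y ∈ Submodule.span ℂ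
      {x : H | ∃ I J : List (Fin d), x = cword S I (adjoint (cword S J) Ω)},
      ∃ N0 : ℕ, ∀ n ≥ N0, Q n y = y := by
    intro y hy
    induction hy using Submodule.span_induction with
    | mem x hx =>
      obtain ⟨I, J, rfl⟩ := hx
      exact ⟨I.length, fun n hn => hgen I J n hn⟩
    | zero => exact ⟨0, fun n _ => map_zero _⟩
    | add x y _ _ hx hy =>
      obtain ⟨N1, h1⟩ := hx
      obtain ⟨N2, h2⟩ := hy
      refine ⟨max N1 N2, fun n hn => ?_⟩
      rw [map_add, h1 n (le_trans (le_max_left _ _) hn),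
        h2 n (le_trans (le_max_right _ _) hn)]
    | smul a x _ hx =>
      obtain ⟨N1, h1⟩ := hx
      exact ⟨N1, fun n hn => by rw [map_smul, h1 n hn]⟩
  have hiv : ∀ x : H, Filter.Tendsto (fun n : ℕ => ((cLam S)^[n] P) x)
      Filter.atTop (nhds x) := by
    intro x
    rw [Metric.tendsto_atTop]
    intro ε hε
    obtain ⟨y, hy, hdist⟩ := Metric.mem_closure_iff.mp (hcyc x) (ε / 3) (by linarith)
    obtain ⟨N0, hN0⟩ := hspan y hy
    refine ⟨N0, fun n hn => ?_⟩
    have hQy := hN0 n hn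
    have hnorm : ‖Q n x - Q n y‖ ≤ ‖x - y‖ := by
      rw [← map_sub]
      exact proj_norm_apply_le (hQsa n) (hQidem n) _
    calc dist (Q n x) x ≤ dist (Q n x) (Q n y) + dist (Q n y) x := dist_triangle _ _ _
      _ = ‖Q n x - Q n y‖ + dist y x := by rw [hQy, dist_eq_norm]
      _ ≤ ‖x - y‖ + dist y x := by linarith
      _ = dist x y + dist x y := by rw [← dist_eq_norm, dist_comm y x]
      _ < ε := by linarith
  exact ⟨hi, hii, hiii, hiv⟩
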